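/- In a Binary Spray and Wait dissemination with replication factor L = 2^k in a network with at least 2^k + 1 nodes (excluding the destination), the set of reachable copy repartitions (up to node identity) is exactly the set of partitions of 2^k into powers of 2; hence the Markov chain modeling the spray phase with an added absorbing delivery state has β(k) + 1 states. -/

import Mathlib

/-!
A split preserves the total number of copies and keeps every part a power of two. Conversely,
a partition of `2 ^ k` into powers of two other than `{2 ^ k}` must repeat a part, because
distinct powers of two below `2 ^ k` add up to less than `2 ^ k`. Merging two equal parts `2 ^ j`
into `2 ^ (j + 1)` undoes a split and lowers the number of parts, so induction on the number of
parts leads back to `{2 ^ k}`.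
-/

/-- The number of partitions of `n` into powers of 2. -/
noncomputable def binaryPartitions (n : ℕ) : ℕ :=
  Nat.card {m : Multiset ℕ // m.sum = n ∧ ∀ x ∈ m, ∃ j : ℕ, x = 2 ^ j}

/-- `β k` is the number of partitions of `2 ^ k` into powers of 2. -/
noncomputable def betaSeq (k : ℕ) : ℕ := binaryPartitions (2 ^ k)

/-- Binary Spray and Wait splitting move on copy repartitions (multisets):
a part `2 ^ m` with `m ≥ 1` is replaced by two parts `2 ^ (m - 1)`. -/
def BSWStep (s t : Multiset ℕ) : Prop :=
  ∃ m : ℕ, 1 ≤ m ∧ (2 ^ m) ∈ s ∧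
    t = (2 ^ (m - 1)) ::ₘ (2 ^ (m - 1)) ::ₘ s.erase (2 ^ m)

open Relation

def IsBinaryPartition (n : ℕ) (s : Multiset ℕ) : Prop :=
  s.sum = n ∧ ∀ x ∈ s, ∃ j : ℕ, x = 2 ^ j

lemma isBinaryPartition_singleton_two_pow (k : ℕ) : IsBinaryPartition (2 ^ k) {2 ^ k} :=
  ⟨Multiset.sum_singleton _, fun _ hx => ⟨k, Multiset.mem_singleton.mp hx⟩⟩

lemma BSWStep.sum_eq {s t : Multiset ℕ} (h : BSWStep s t) : t.sum = s.sum := by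
  obtain ⟨m, hm, hmem, rfl⟩ := h
  obtain ⟨j, rfl⟩ : ∃ j, m = j + 1 := ⟨m - 1, by omega⟩
  conv_rhs => rw [← Multiset.cons_erase hmem]
  simp only [Multiset.sum_cons, Nat.add_sub_cancel, pow_succ]
  ring

lemma BSWStep.isBinaryPartition {n : ℕ} {s t : Multiset ℕ} (h : BSWStep s t)
    (hs : IsBinaryPartition n s) : IsBinaryPartition n t := by
  refine ⟨h.sum_eq.trans hs.1, ?_⟩
  obtain ⟨m, -, -, rfl⟩ := h
  intro x hx
  rcases Multiset.mem_cons.mp hx with rfl | hx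
  · exact ⟨m - 1, rfl⟩
  rcases Multiset.mem_cons.mp hx with rfl | hx
  · exact ⟨m - 1, rfl⟩
  exact hs.2 x (Multiset.mem_of_mem_erase hx)

lemma IsBinaryPartition.of_reflTransGen {n : ℕ} {s t : Multiset ℕ}
    (h : ReflTransGen BSWStep s t) (hs : IsBinaryPartition n s) : IsBinaryPartition n t := by
  induction h with
  | refl => exact hs
  | tail _ hstep ih => exact hstep.isBinaryPartition ih

lemma bswStep_two_pow_succ (j : ℕ) (u : Multiset ℕ) :
    BSWStep (2 ^ (j + 1) ::ₘ u) (2 ^ j ::ₘ 2 ^ j ::ₘ u) :=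
  ⟨j + 1, by omega, Multiset.mem_cons_self _ _, by
    rw [Multiset.erase_cons_head, Nat.add_sub_cancel]⟩

lemma Multiset.sum_lt_two_pow_of_nodup {s : Multiset ℕ} {k : ℕ} (hnd : s.Nodup)
    (hs : ∀ x ∈ s, ∃ j < k, x = 2 ^ j) : s.sum < 2 ^ k := by
  choose! e hek he using hs
  let t : Finset ℕ := ⟨s, hnd⟩
  calc s.sum = ∑ x ∈ t, 2 ^ e x := by
        rw [Finset.sum_eq_multiset_sum, ← Multiset.map_id s]
        exact congrArg Multiset.sum (Multiset.map_congr rfl he)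
    _ = ∑ i ∈ t.image e, 2 ^ i := by
        refine (Finset.sum_image fun x hx y hy hxy => ?_).symm
        rw [he x hx, he y hy, hxy]
    _ < 2 ^ k := Nat.geomSum_lt le_rfl fun i hi => by
        obtain ⟨x, hx, rfl⟩ := Finset.mem_image.mp hi
        exact hek x hx

lemma IsBinaryPartition.eq_singleton_of_nodup {k : ℕ} {s : Multiset ℕ}
    (hs : IsBinaryPartition (2 ^ k) s) (hnd : s.Nodup) : s = {2 ^ k} := by
  by_cases hk : 2 ^ k ∈ s
  · obtain ⟨u, rfl⟩ := Multiset.exists_cons_of_mem hk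
    suffices u = 0 by rw [this]; rfl
    have hu : u.sum = 0 := by have := hs.1; simp only [Multiset.sum_cons] at this; omega
    refine Multiset.eq_zero_of_forall_notMem fun x hx => ?_
    obtain ⟨j, rfl⟩ := hs.2 x (Multiset.mem_cons_of_mem hx)
    have := Multiset.le_sum_of_mem hx
    have := Nat.two_pow_pos j
    omega
  · refine absurd hs.1 (Multiset.sum_lt_two_pow_of_nodup hnd fun x hx => ?_).ne
    obtain ⟨j, rfl⟩ := hs.2 x hx
    have hle : 2 ^ j ≤ 2 ^ k := hs.1 ▸ Multiset.le_sum_of_mem hx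
    have hne : j ≠ k := by rintro rfl; exact hk hx
    exact ⟨j, lt_of_le_of_ne ((Nat.pow_le_pow_iff_right one_lt_two).mp hle) hne, rfl⟩

lemma IsBinaryPartition.reflTransGen {k : ℕ} {s : Multiset ℕ}
    (hs : IsBinaryPartition (2 ^ k) s) :
    ReflTransGen BSWStep {2 ^ k} s := by
  induction hc : Multiset.card s using Nat.strong_induction_on generalizing s with
  | _ c ih =>
  by_cases hnd : s.Nodup
  · rw [hs.eq_singleton_of_nodup hnd]
  obtain ⟨x, u, rfl⟩ : ∃ x u, s = x ::ₘ x ::ₘ u := by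
    simpa [Multiset.nodup_iff_ne_cons_cons] using hnd
  obtain ⟨j, rfl⟩ := hs.2 x (Multiset.mem_cons_self _ _)
  have hmerged : IsBinaryPartition (2 ^ k) (2 ^ (j + 1) ::ₘ u) := by
    refine ⟨?_, fun y hy => ?_⟩
    · rw [← hs.1]; simp only [Multiset.sum_cons, pow_succ]; ring
    · rcases Multiset.mem_cons.mp hy with rfl | hy
      · exact ⟨j + 1, rfl⟩
      · exact hs.2 y (Multiset.mem_cons_of_mem (Multiset.mem_cons_of_mem hy))
  refine (ih _ ?_ hmerged rfl).tail (bswStep_two_pow_succ j u)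
  simp only [← hc, Multiset.card_cons]
  omega

theorem bsw_reachable_states_general (k : ℕ) :
    {s : Multiset ℕ | Relation.ReflTransGen BSWStep {2 ^ k} s} =
      {s : Multiset ℕ | s.sum = 2 ^ k ∧ ∀ x ∈ s, ∃ j : ℕ, x = 2 ^ j} ∧
    Nat.card {s : Multiset ℕ // Relation.ReflTransGen BSWStep {2 ^ k} s} + 1 =
      betaSeq k + 1 := by
  have hreach : {s : Multiset ℕ | ReflTransGen BSWStep {2 ^ k} s} =
      {s : Multiset ℕ | IsBinaryPartition (2 ^ k) s} :=
    Set.ext fun _ => ⟨fun h => (isBinaryPartition_singleton_two_pow k).of_reflTransGen h,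
      IsBinaryPartition.reflTransGen⟩
  refine ⟨hreach, ?_⟩
  rw [betaSeq, binaryPartitions]
  exact congrArg (· + 1) (Nat.card_congr (Equiv.setCongr hreach))

/-- In a BSW dissemination with replication factor `2 ^ k` in a network with at
least `2 ^ k + 1` non-destination nodes, the reachable copy repartitions are
exactly the partitions of `2 ^ k` into powers of 2, so the Markov chain with an
added absorbing state has `β k + 1` states. -/
theorem bsw_reachable_states (k N : ℕ) (hN : 2 ^ k + 1 ≤ N) :
    {s : Multiset ℕ | Relation.ReflTransGen BSWStep {2 ^ k} s} =
      {s : Multiset ℕ | s.sum = 2 ^ k ∧ ∀ x ∈ s, ∃ j : ℕ, x = 2 ^ j} ∧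
    Nat.card {s : Multiset ℕ // Relation.ReflTransGen BSWStep {2 ^ k} s} + 1 =
      betaSeq k + 1 :=
  bsw_reachable_states_general k
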